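/- arXiv:2211.09891 — 2 statements merged into one kernel-verified Lean document; each statement's English description precedes it below -/
import Mathlib

section
/- For every r' ∈ ℤ \ {0} and every σ with 0 ≤ σ < 1, the sum ∑_{r ∈ ℕ, r ≠ ±r'} (1/r)^σ · 1/(r+r')² is at most (2 + 3ζ(2)) · 1/|r'|^σ, where ζ is the Riemann zeta function. -/
open Real

lemma aux_int_sum : ∑' k : ℤ, 1 / (k : ℝ) ^ 2 = π ^ 2 / 3 := by
  have h2 : HasSum (fun n : ℕ => 1 / ((n : ℝ) + 1) ^ 2) (π ^ 2 / 6) := by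
    have := (hasSum_nat_add_iff' (f := fun n : ℕ => (1 : ℝ) / (n : ℝ) ^ 2) 1).mpr
      hasSum_zeta_two
    simpa using this
  have H : HasSum (fun k : ℤ => 1 / (k : ℝ) ^ 2) (π ^ 2 / 6 + π ^ 2 / 6) := by
    apply HasSum.of_nat_of_neg_add_one (f := fun k : ℤ => 1 / (k : ℝ) ^ 2)
    · have e : (fun n : ℕ => 1 / (((n : ℤ)) : ℝ) ^ 2) = fun n : ℕ => 1 / (n : ℝ) ^ 2 := by
        funext n; push_cast; ring
      rw [e]; exact hasSum_zeta_two
    · have e : (fun n : ℕ => 1 / (((-((n : ℤ) + 1)) : ℤ) : ℝ) ^ 2)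
          = fun n : ℕ => 1 / ((n : ℝ) + 1) ^ 2 := by
        funext n; push_cast; ring
      rw [e]; exact h2
  rw [H.tsum_eq]; ring

theorem stmt8 (r' : ℤ) (hr' : r' ≠ 0) (σ : ℝ) (hσ0 : 0 ≤ σ) (hσ1 : σ < 1) :
    (∑' r : ℕ, if 0 < r ∧ (r : ℤ) ≠ r' ∧ (r : ℤ) ≠ -r' then
        (1 / (r : ℝ)) ^ σ * (1 / ((r : ℝ) + (r' : ℝ))^2) else 0)
      ≤ (2 + 3 * (Real.pi^2 / 6)) * (1 / (|r'| : ℝ) ^ σ) := by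
  set m : ℝ := |(r' : ℝ)| with hmdef
  have hm1 : (1 : ℝ) ≤ m := by
    have h : (1 : ℤ) ≤ |r'| := Int.one_le_abs hr'
    rw [hmdef, ← Int.cast_abs]
    exact_mod_cast h
  have hm0 : (0 : ℝ) < m := lt_of_lt_of_le one_pos hm1
  set C : ℝ := 1 / m ^ σ with hCdef
  have hC0 : 0 < C := by positivity
  have hr'm : -m ≤ (r' : ℝ) := by
    rw [hmdef]
    exact neg_abs_le _
  have hr'sq : ((r' : ℝ)) ^ 2 = m ^ 2 := by
    rw [hmdef, sq_abs]
  -- the comparison function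
  set g : ℕ → ℝ := fun r =>
    C * (3 / 2) * (1 / ((r : ℝ) + (r' : ℝ)) ^ 2) + C * (1 / 2) * (1 / (r : ℝ) ^ 2)
    with hgdef
  set f : ℕ → ℝ := fun r => if 0 < r ∧ (r : ℤ) ≠ r' ∧ (r : ℤ) ≠ -r' then
      (1 / (r : ℝ)) ^ σ * (1 / ((r : ℝ) + (r' : ℝ))^2) else 0 with hfdef
  have hf_nonneg : ∀ r, 0 ≤ f r := by
    intro r
    rw [hfdef]
    dsimp only
    split
    · positivity
    · exact le_refl 0
  -- pointwise bound
  have hfg : ∀ r, f r ≤ g r := by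
    intro r
    rw [hfdef, hgdef]
    dsimp only
    split
    · rename_i hcond
      obtain ⟨hr0, _, hrne⟩ := hcond
      have hr1 : (1 : ℝ) ≤ (r : ℝ) := by exact_mod_cast hr0
      have hrpos : (0 : ℝ) < (r : ℝ) := lt_of_lt_of_le one_pos hr1
      have hDne : ((r : ℝ) + (r' : ℝ)) ≠ 0 := by
        intro h
        apply hrne
        have : ((r : ℤ) + r' : ℤ) = 0 := by exact_mod_cast h
        omega
      have hD : (0 : ℝ) < ((r : ℝ) + (r' : ℝ)) ^ 2 := by positivity
      set D : ℝ := ((r : ℝ) + (r' : ℝ)) ^ 2 with hDdef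
      -- step A : (1/r)^σ ≤ C * max 1 (m/r)
      have hA : (1 / (r : ℝ)) ^ σ ≤ C * max 1 (m / (r : ℝ)) := by
        have hCeq : (1 / m) ^ σ = C := by
          rw [hCdef, Real.div_rpow zero_le_one (le_of_lt hm0), Real.one_rpow]
        rcases le_total m (r : ℝ) with h | h
        · have h1 : (1 / (r : ℝ)) ^ σ ≤ (1 / m) ^ σ := by
            apply Real.rpow_le_rpow (by positivity) _ hσ0
            exact one_div_le_one_div_of_le hm0 h
          calc (1 / (r : ℝ)) ^ σ ≤ (1 / m) ^ σ := h1
            _ = C * 1 := by rw [hCeq, mul_one]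
            _ ≤ C * max 1 (m / (r : ℝ)) :=
              mul_le_mul_of_nonneg_left (le_max_left _ _) hC0.le
        · have hsplit : (1 / (r : ℝ)) = (1 / m) * (m / (r : ℝ)) := by
            field_simp
          have hbase : (1 : ℝ) ≤ m / (r : ℝ) := (one_le_div hrpos).mpr h
          have h1 : (1 / (r : ℝ)) ^ σ = (1 / m) ^ σ * (m / (r : ℝ)) ^ σ := by
            rw [hsplit, Real.mul_rpow (by positivity) (by positivity)]
          have h2 : (m / (r : ℝ)) ^ σ ≤ (m / (r : ℝ)) ^ (1 : ℝ) :=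
            Real.rpow_le_rpow_of_exponent_le hbase hσ1.le
          rw [Real.rpow_one] at h2
          calc (1 / (r : ℝ)) ^ σ = (1 / m) ^ σ * (m / (r : ℝ)) ^ σ := h1
            _ ≤ (1 / m) ^ σ * (m / (r : ℝ)) := by
              apply mul_le_mul_of_nonneg_left h2 (by positivity)
            _ = C * (m / (r : ℝ)) := by rw [hCeq]
            _ ≤ C * max 1 (m / (r : ℝ)) :=
              mul_le_mul_of_nonneg_left (le_max_right _ _) hC0.le
      -- step C : max 1 (m/r) * (1/D) ≤ (3/2)*(1/D) + (1/2)*(1/r²)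
      have hstepC : max 1 (m / (r : ℝ)) * (1 / D) ≤
          (3 / 2) * (1 / D) + (1 / 2) * (1 / (r : ℝ) ^ 2) := by
        rcases le_total m (r : ℝ) with h | h
        · have hmax : max 1 (m / (r : ℝ)) = 1 :=
            max_eq_left ((div_le_one hrpos).mpr h)
          rw [hmax, one_mul]
          have h1 : (0 : ℝ) ≤ 1 / D := by positivity
          have h2 : (0 : ℝ) ≤ 1 / (r : ℝ) ^ 2 := by positivity
          linarith
        · have hmax : max 1 (m / (r : ℝ)) = m / (r : ℝ) :=
            max_eq_right ((one_le_div hrpos).mpr h)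
          rw [hmax]
          have hkey : 2 * m * (r : ℝ) ≤ 3 * (r : ℝ) ^ 2 + D := by
            rw [hDdef]
            nlinarith [sq_nonneg (2 * (r : ℝ) - m), mul_nonneg hrpos.le (by linarith : (0:ℝ) ≤ (r' : ℝ) + m)]
          have e1 : m / (r : ℝ) * (1 / D) = (2 * m * (r : ℝ)) * (1 / (2 * (r : ℝ) ^ 2 * D)) := by
            field_simp
          have e2 : (3 / 2) * (1 / D) + (1 / 2) * (1 / (r : ℝ) ^ 2)
              = (3 * (r : ℝ) ^ 2 + D) * (1 / (2 * (r : ℝ) ^ 2 * D)) := by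
            field_simp
          rw [e1, e2]
          exact mul_le_mul_of_nonneg_right hkey (by positivity)
      calc (1 / (r : ℝ)) ^ σ * (1 / D)
          ≤ (C * max 1 (m / (r : ℝ))) * (1 / D) :=
            mul_le_mul_of_nonneg_right hA (by positivity)
        _ = C * (max 1 (m / (r : ℝ)) * (1 / D)) := by ring
        _ ≤ C * ((3 / 2) * (1 / D) + (1 / 2) * (1 / (r : ℝ) ^ 2)) :=
            mul_le_mul_of_nonneg_left hstepC hC0.le
        _ = C * (3 / 2) * (1 / D) + C * (1 / 2) * (1 / (r : ℝ) ^ 2) := by ring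
    · positivity
  -- summability
  have hinj : Function.Injective (fun r : ℕ => (r : ℤ) + r') := by
    intro a b h
    simp only at h
    omega
  have hZ : Summable (fun k : ℤ => 1 / (k : ℝ) ^ 2) :=
    Real.summable_one_div_int_pow.mpr one_lt_two
  have hS1 : Summable (fun r : ℕ => 1 / ((r : ℝ) + (r' : ℝ)) ^ 2) := by
    have := hZ.comp_injective hinj
    refine this.congr fun r => ?_
    simp only [Function.comp]
    push_cast
    ring
  have hS2 : Summable (fun r : ℕ => 1 / (r : ℝ) ^ 2) :=
    Real.summable_one_div_nat_pow.mpr one_lt_two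
  have hg_summ : Summable g := by
    rw [hgdef]
    exact ((hS1.mul_left _).add (hS2.mul_left _))
  have hf_summ : Summable f := Summable.of_nonneg_of_le hf_nonneg hfg hg_summ
  -- bound the first comparison sum via injection into ℤ
  have hS1_bound : ∑' r : ℕ, 1 / ((r : ℝ) + (r' : ℝ)) ^ 2 ≤ π ^ 2 / 3 := by
    rw [← aux_int_sum]
    apply hS1.tsum_le_tsum_of_inj (fun r : ℕ => (r : ℤ) + r') hinj
    · intro c _
      positivity
    · intro r
      apply le_of_eq
      push_cast
      ring
    · exact hZ
  have hS2_eq : ∑' r : ℕ, 1 / (r : ℝ) ^ 2 = π ^ 2 / 6 := hasSum_zeta_two.tsum_eq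
  -- assemble
  have htsum_g : ∑' r, g r
      = C * (3 / 2) * (∑' r : ℕ, 1 / ((r : ℝ) + (r' : ℝ)) ^ 2)
        + C * (1 / 2) * (∑' r : ℕ, 1 / (r : ℝ) ^ 2) := by
    rw [hgdef, Summable.tsum_add (hS1.mul_left _) (hS2.mul_left _), tsum_mul_left, tsum_mul_left]
  have hmain : ∑' r, f r ≤ ∑' r, g r := hf_summ.tsum_le_tsum hfg hg_summ
  rw [htsum_g, hS2_eq] at hmain
  have hfinal : C * (3 / 2) * (∑' r : ℕ, 1 / ((r : ℝ) + (r' : ℝ)) ^ 2)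
      + C * (1 / 2) * (π ^ 2 / 6) ≤ (2 + 3 * (π ^ 2 / 6)) * C := by
    have hpi : π ^ 2 ≤ 24 := by
      nlinarith [Real.pi_lt_d2, Real.pi_gt_three]
    nlinarith [mul_le_mul_of_nonneg_left hS1_bound (by positivity : (0:ℝ) ≤ C * (3/2)),
      hC0.le, mul_nonneg hC0.le (sq_nonneg π)]
  calc ∑' r, f r ≤ _ := hmain
    _ ≤ (2 + 3 * (π ^ 2 / 6)) * C := hfinal
end

section
/- For every r' ∈ ℤ \ {0} and 0 ≤ σ < 1, the sum ∑_{r ∈ ℕ, r ≠ ±r'} |r'/r|^σ · 1/(r+r')² is bounded by 2 + 3ζ(2), uniformly in r'. -/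
open Real

private lemma basel_shift : ∑' k : ℕ, (1:ℝ)/((k:ℝ)+1)^2 = π^2/6 := by
  have hs := hasSum_zeta_two.summable
  have h := Summable.sum_add_tsum_nat_add (f := fun n : ℕ => (1:ℝ)/(n:ℝ)^2) 1 hs
  rw [hasSum_zeta_two.tsum_eq] at h
  simp only [Finset.sum_range_one, Nat.cast_zero] at h
  norm_num at h
  rw [← h]
  apply tsum_congr
  intro k
  push_cast
  ring_nf

private lemma basel_shift_summable : Summable (fun k : ℕ => (1:ℝ)/((k:ℝ)+1)^2) := by
  have hs := (summable_nat_add_iff 1).mpr hasSum_zeta_two.summable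
  apply hs.congr
  intro k
  push_cast
  ring_nf

-- the positive-shift part
private lemma part_a (r' : ℤ) :
    Summable (fun r : ℕ => if (0 < r ∧ (r:ℤ) ≠ r' ∧ (r:ℤ) ≠ -r') ∧ 0 < (r:ℤ) + r' then
        1/((r:ℝ)+(r':ℝ))^2 else 0) ∧
    (∑' r : ℕ, if (0 < r ∧ (r:ℤ) ≠ r' ∧ (r:ℤ) ≠ -r') ∧ 0 < (r:ℤ) + r' then
        1/((r:ℝ)+(r':ℝ))^2 else 0) ≤ π^2/6 := by
  set a : ℕ → ℝ := fun r => if (0 < r ∧ (r:ℤ) ≠ r' ∧ (r:ℤ) ≠ -r') ∧ 0 < (r:ℤ) + r' then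
        1/((r:ℝ)+(r':ℝ))^2 else 0 with ha
  set N : ℕ := (1 - r').toNat with hN
  have hzero : ∀ r < N, a r = 0 := by
    intro r hr
    rw [ha]
    simp only
    rw [if_neg]
    rintro ⟨-, hpos⟩
    omega
  have hbound : ∀ k : ℕ, a (k + N) ≤ (1:ℝ)/((k:ℝ)+1)^2 := by
    intro k
    rw [ha]
    simp only
    split
    · rename_i hc
      obtain ⟨-, hpos⟩ := hc
      have hk1 : ((k:ℤ) + 1) ≤ ((k + N : ℕ) : ℤ) + r' := by push_cast; omega
      have hk1' : ((k:ℝ) + 1) ≤ ((k + N : ℕ) : ℝ) + (r' : ℝ) := by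
        exact_mod_cast hk1
      have hkpos : (0:ℝ) < (k:ℝ) + 1 := by positivity
      apply one_div_le_one_div_of_le (by positivity)
      have h2 : (0:ℝ) ≤ (k:ℝ)+1 := le_of_lt hkpos
      calc ((k:ℝ)+1)^2 ≤ (((k + N : ℕ) : ℝ) + (r' : ℝ))^2 := by nlinarith
        _ = _ := by push_cast; ring
    · positivity
  have hnonneg : ∀ r, 0 ≤ a r := by
    intro r; rw [ha]; simp only; split <;> positivity
  have hsum_shift : Summable (fun k : ℕ => a (k + N)) := by
    apply Summable.of_nonneg_of_le (fun k => hnonneg _) hbound basel_shift_summable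
  have hsum : Summable a := (summable_nat_add_iff N).mp hsum_shift
  refine ⟨hsum, ?_⟩
  have key := Summable.sum_add_tsum_nat_add (f := a) N hsum
  rw [← key]
  have hhead : ∑ i ∈ Finset.range N, a i = 0 := by
    apply Finset.sum_eq_zero
    intro i hi
    exact hzero i (Finset.mem_range.mp hi)
  rw [hhead, zero_add, ← basel_shift]
  exact Summable.tsum_le_tsum hbound hsum_shift basel_shift_summable

-- the negative part (finite support)
private lemma part_b (r' : ℤ) :
    Summable (fun r : ℕ => if (0 < r ∧ (r:ℤ) ≠ r' ∧ (r:ℤ) ≠ -r') ∧ (r:ℤ) + r' < 0 then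
        1/((r:ℝ)+(r':ℝ))^2 else 0) ∧
    (∑' r : ℕ, if (0 < r ∧ (r:ℤ) ≠ r' ∧ (r:ℤ) ≠ -r') ∧ (r:ℤ) + r' < 0 then
        1/((r:ℝ)+(r':ℝ))^2 else 0) ≤ π^2/6 := by
  set b : ℕ → ℝ := fun r => if (0 < r ∧ (r:ℤ) ≠ r' ∧ (r:ℤ) ≠ -r') ∧ (r:ℤ) + r' < 0 then
        1/((r:ℝ)+(r':ℝ))^2 else 0 with hb
  set M : ℕ := (-r').toNat with hM
  have hzero : ∀ r ∉ Finset.range M, b r = 0 := by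
    intro r hr
    rw [Finset.mem_range, not_lt] at hr
    rw [hb]; simp only
    rw [if_neg]
    rintro ⟨⟨hpos, -, -⟩, hneg⟩
    omega
  have hsum : Summable b := summable_of_ne_finset_zero hzero
  refine ⟨hsum, ?_⟩
  rw [tsum_eq_sum hzero]
  have hbound : ∀ i ∈ Finset.range M, b i ≤ (1:ℝ)/(((M - 1 - i : ℕ):ℝ)+1)^2 := by
    intro i hi
    rw [Finset.mem_range] at hi
    rw [hb]; simp only
    split
    · rename_i hc
      obtain ⟨⟨hpos, -, -⟩, hneg⟩ := hc
      have heq : ((i:ℤ) + r') = -(((M - 1 - i : ℕ):ℤ) + 1) := by push_cast; omega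
      have heqR : ((i:ℝ) + (r':ℝ)) = -(((M - 1 - i : ℕ):ℝ) + 1) := by
        have := congrArg (fun z : ℤ => (z : ℝ)) heq
        push_cast at this
        linarith
      rw [heqR, neg_sq]
    · positivity
  calc ∑ i ∈ Finset.range M, b i
      ≤ ∑ i ∈ Finset.range M, (1:ℝ)/(((M - 1 - i : ℕ):ℝ)+1)^2 :=
        Finset.sum_le_sum hbound
    _ = ∑ j ∈ Finset.range M, (1:ℝ)/((j:ℝ)+1)^2 :=
        Finset.sum_range_reflect (fun j => (1:ℝ)/((j:ℝ)+1)^2) M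
    _ ≤ ∑' j : ℕ, (1:ℝ)/((j:ℝ)+1)^2 :=
        Summable.sum_le_tsum _ (fun j _ => by positivity) basel_shift_summable
    _ = π^2/6 := basel_shift

private lemma pointwise (r' : ℤ) (σ : ℝ) (hσ0 : 0 ≤ σ) (hσ1 : σ < 1) (r : ℕ)
    (h : 0 < r ∧ (r:ℤ) ≠ r' ∧ (r:ℤ) ≠ -r') :
    |(r':ℝ)/(r:ℝ)|^σ * (1/((r:ℝ)+(r':ℝ))^2)
      ≤ (1/2) * (1/(r:ℝ)^2) + (3/2) * (1/((r:ℝ)+(r':ℝ))^2) := by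
  obtain ⟨hpos, hne1, hne2⟩ := h
  have hR : (1:ℝ) ≤ (r:ℝ) := by exact_mod_cast hpos
  have hR0 : (0:ℝ) < (r:ℝ) := by linarith
  have hsne : ((r:ℝ) + (r':ℝ)) ≠ 0 := by
    intro hcontra
    have : ((r:ℤ) + r' : ℤ) = 0 := by
      have : (((r:ℤ) + r' : ℤ) : ℝ) = 0 := by push_cast; linarith
      exact_mod_cast this
    omega
  have hm : (0:ℝ) < |(r:ℝ) + (r':ℝ)| := abs_pos.mpr hsne
  have hsq : ((r:ℝ) + (r':ℝ))^2 = |(r:ℝ) + (r':ℝ)|^2 := (sq_abs _).symm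
  have hsqpos : (0:ℝ) < ((r:ℝ) + (r':ℝ))^2 := by positivity
  set m := |(r:ℝ) + (r':ℝ)| with hmdef
  have htri : |(r':ℝ)| ≤ m + (r:ℝ) := by
    calc |(r':ℝ)| = |((r:ℝ) + (r':ℝ)) - (r:ℝ)| := by ring_nf
      _ ≤ |(r:ℝ) + (r':ℝ)| + |(r:ℝ)| := abs_sub _ _
      _ = m + (r:ℝ) := by rw [abs_of_pos hR0]
  rcases le_or_gt |(r':ℝ)/(r:ℝ)| 1 with hle | hgt
  · have h1 : |(r':ℝ)/(r:ℝ)|^σ ≤ 1 := Real.rpow_le_one (abs_nonneg _) hle hσ0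
    have h2 : |(r':ℝ)/(r:ℝ)|^σ * (1/((r:ℝ)+(r':ℝ))^2) ≤ 1/((r:ℝ)+(r':ℝ))^2 := by
      calc |(r':ℝ)/(r:ℝ)|^σ * (1/((r:ℝ)+(r':ℝ))^2) ≤ 1 * (1/((r:ℝ)+(r':ℝ))^2) := by
            apply mul_le_mul_of_nonneg_right h1 (by positivity)
        _ = 1/((r:ℝ)+(r':ℝ))^2 := one_mul _
    have h3 : (0:ℝ) ≤ 1/(r:ℝ)^2 := by positivity
    have h4 : (0:ℝ) ≤ 1/((r:ℝ)+(r':ℝ))^2 := by positivity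
    linarith
  · have h1 : |(r':ℝ)/(r:ℝ)|^σ ≤ |(r':ℝ)/(r:ℝ)| := by
      calc |(r':ℝ)/(r:ℝ)|^σ ≤ |(r':ℝ)/(r:ℝ)|^(1:ℝ) :=
            Real.rpow_le_rpow_of_exponent_le (le_of_lt hgt) (le_of_lt hσ1)
        _ = |(r':ℝ)/(r:ℝ)| := Real.rpow_one _
    have habs : |(r':ℝ)/(r:ℝ)| = |(r':ℝ)|/(r:ℝ) := by
      rw [abs_div, abs_of_pos hR0]
    have h2 : |(r':ℝ)/(r:ℝ)|^σ * (1/((r:ℝ)+(r':ℝ))^2)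
        ≤ (|(r':ℝ)|/(r:ℝ)) * (1/m^2) := by
      rw [hsq]
      apply mul_le_mul_of_nonneg_right _ (by positivity)
      rw [← habs]; exact h1
    have key : (|(r':ℝ)|/(r:ℝ)) * (1/m^2) ≤ (1/2) * (1/(r:ℝ)^2) + (3/2) * (1/m^2) := by
      have hkey : |(r':ℝ)| * (2*(r:ℝ)) ≤ m^2 + 3*(r:ℝ)^2 := by
        nlinarith [sq_nonneg (m - (r:ℝ)),
          mul_le_mul_of_nonneg_right htri (by positivity : (0:ℝ) ≤ 2*(r:ℝ))]
      have hr0 : (r:ℝ) ≠ 0 := ne_of_gt hR0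
      have hm0 : m ≠ 0 := ne_of_gt hm
      set A := |(r':ℝ)| with hAdef
      have e2 : (A/(r:ℝ)) * (1/m^2)
          = (A * (2*(r:ℝ))) * (1/(2*(r:ℝ)^2*m^2)) := by
        field_simp
      have e3 : (1/2) * (1/(r:ℝ)^2) + (3/2) * (1/m^2)
          = (m^2 + 3*(r:ℝ)^2) * (1/(2*(r:ℝ)^2*m^2)) := by
        field_simp
      rw [e2, e3]
      exact mul_le_mul_of_nonneg_right hkey (by positivity)
    calc |(r':ℝ)/(r:ℝ)|^σ * (1/((r:ℝ)+(r':ℝ))^2)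
        ≤ (|(r':ℝ)|/(r:ℝ)) * (1/m^2) := h2
      _ ≤ (1/2) * (1/(r:ℝ)^2) + (3/2) * (1/m^2) := key
      _ = (1/2) * (1/(r:ℝ)^2) + (3/2) * (1/((r:ℝ)+(r':ℝ))^2) := by rw [← hsq]

theorem stmt9 (r' : ℤ) (hr' : r' ≠ 0) (σ : ℝ) (hσ0 : 0 ≤ σ) (hσ1 : σ < 1) :
    (∑' r : ℕ, if 0 < r ∧ (r : ℤ) ≠ r' ∧ (r : ℤ) ≠ -r' then
        |(r' : ℝ) / (r : ℝ)| ^ σ * (1 / ((r : ℝ) + (r' : ℝ))^2) else 0)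
      ≤ 2 + 3 * (Real.pi^2 / 6) := by
  obtain ⟨hsumA, htsumA⟩ := part_a r'
  obtain ⟨hsumB, htsumB⟩ := part_b r'
  set a : ℕ → ℝ := fun r => if (0 < r ∧ (r:ℤ) ≠ r' ∧ (r:ℤ) ≠ -r') ∧ 0 < (r:ℤ) + r' then
        1/((r:ℝ)+(r':ℝ))^2 else 0 with hadef
  set b : ℕ → ℝ := fun r => if (0 < r ∧ (r:ℤ) ≠ r' ∧ (r:ℤ) ≠ -r') ∧ (r:ℤ) + r' < 0 then
        1/((r:ℝ)+(r':ℝ))^2 else 0 with hbdef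
  set F : ℕ → ℝ := fun r => if 0 < r ∧ (r : ℤ) ≠ r' ∧ (r : ℤ) ≠ -r' then
        |(r' : ℝ) / (r : ℝ)| ^ σ * (1 / ((r : ℝ) + (r' : ℝ))^2) else 0 with hFdef
  have hG : Summable (fun r : ℕ => (1:ℝ)/(r:ℝ)^2) := hasSum_zeta_two.summable
  have hGsum : ∑' r : ℕ, (1:ℝ)/(r:ℝ)^2 = π^2/6 := hasSum_zeta_two.tsum_eq
  -- pointwise bound
  have hpt : ∀ r : ℕ, F r ≤ (1/2) * ((1:ℝ)/(r:ℝ)^2) + (3/2) * (a r + b r) := by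
    intro r
    rw [hFdef, hadef, hbdef]
    simp only
    by_cases hc : 0 < r ∧ (r : ℤ) ≠ r' ∧ (r : ℤ) ≠ -r'
    · rw [if_pos hc]
      have hab : (if (0 < r ∧ (r:ℤ) ≠ r' ∧ (r:ℤ) ≠ -r') ∧ 0 < (r:ℤ) + r' then
            1/((r:ℝ)+(r':ℝ))^2 else 0)
          + (if (0 < r ∧ (r:ℤ) ≠ r' ∧ (r:ℤ) ≠ -r') ∧ (r:ℤ) + r' < 0 then
            1/((r:ℝ)+(r':ℝ))^2 else 0)
          = 1/((r:ℝ)+(r':ℝ))^2 := by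
        have hne : (r:ℤ) + r' ≠ 0 := by
          obtain ⟨-, -, h2⟩ := hc; omega
        rcases lt_or_gt_of_ne hne with hneg | hpos
        · rw [if_neg (by rintro ⟨-, hx⟩; omega), if_pos ⟨hc, hneg⟩, zero_add]
        · rw [if_pos ⟨hc, hpos⟩, if_neg (by rintro ⟨-, hx⟩; omega), add_zero]
      rw [hab]
      exact pointwise r' σ hσ0 hσ1 r hc
    · rw [if_neg hc]
      have h1 : (0:ℝ) ≤ 1/(r:ℝ)^2 := by positivity
      have h2 : (0:ℝ) ≤ (if (0 < r ∧ (r:ℤ) ≠ r' ∧ (r:ℤ) ≠ -r') ∧ 0 < (r:ℤ) + r' then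
          1/((r:ℝ)+(r':ℝ))^2 else 0) := by
        split
        · positivity
        · exact le_rfl
      have h3 : (0:ℝ) ≤ (if (0 < r ∧ (r:ℤ) ≠ r' ∧ (r:ℤ) ≠ -r') ∧ (r:ℤ) + r' < 0 then
          1/((r:ℝ)+(r':ℝ))^2 else 0) := by
        split
        · positivity
        · exact le_rfl
      linarith
  have hFnonneg : ∀ r, 0 ≤ F r := by
    intro r; rw [hFdef]; simp only; split
    · positivity
    · exact le_rfl
  have hRHSsum : Summable (fun r : ℕ => (1/2) * ((1:ℝ)/(r:ℝ)^2) + (3/2) * (a r + b r)) :=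
    (hG.mul_left _).add ((hsumA.add hsumB).mul_left _)
  have hFsum : Summable F := Summable.of_nonneg_of_le hFnonneg hpt hRHSsum
  have step1 : ∑' r : ℕ, F r ≤ ∑' r : ℕ, ((1/2) * ((1:ℝ)/(r:ℝ)^2) + (3/2) * (a r + b r)) :=
    Summable.tsum_le_tsum hpt hFsum hRHSsum
  have step2 : ∑' r : ℕ, ((1/2) * ((1:ℝ)/(r:ℝ)^2) + (3/2) * (a r + b r))
      = (1/2) * (π^2/6) + (3/2) * (∑' r : ℕ, a r + ∑' r : ℕ, b r) := by
    rw [Summable.tsum_add (hG.mul_left _) ((hsumA.add hsumB).mul_left _),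
      tsum_mul_left, tsum_mul_left, hGsum, Summable.tsum_add hsumA hsumB]
  have hzeta_pos : (0:ℝ) ≤ π^2/6 := by positivity
  have step3 : (1/2) * (π^2/6) + (3/2) * (∑' r : ℕ, a r + ∑' r : ℕ, b r)
      ≤ (1/2) * (π^2/6) + (3/2) * (π^2/6 + π^2/6) := by
    have : ∑' r : ℕ, a r + ∑' r : ℕ, b r ≤ π^2/6 + π^2/6 := add_le_add htsumA htsumB
    linarith
  have hpi : π ≤ 4 := Real.pi_le_four
  have hpi0 : 0 < π := Real.pi_pos
  calc ∑' r : ℕ, F r ≤ (1/2) * (π^2/6) + (3/2) * (π^2/6 + π^2/6) := by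
        linarith [step1, step2.le, step3]
    _ ≤ 2 + 3 * (π^2/6) := by nlinarith
end
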